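/- arXiv:1607.00571 — 2 statements merged into one kernel-verified Lean document; each statement's English description precedes it below -/
import Mathlib

section
/- The exterior derivative d is injective on the image of the Koszul operator κ within polynomial differential forms on ℝ^n: if μ is a polynomial (k+1)-form and d(κμ) = 0, then κμ = 0. -/
open MvPolynomial

/-- Polynomial differential forms on `ℝ^n`: a family of polynomial coefficients indexed by
subsets `σ ⊆ {1,…,n}`; a `k`-form is supported on sets of cardinality `k`. -/
abbrev PolyForm (n : ℕ) := Finset (Fin n) → MvPolynomial (Fin n) ℝ

/-- The sign `(-1)^{#{j ∈ σ : j < i}}`. -/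
noncomputable def sgn {n : ℕ} (σ : Finset (Fin n)) (i : Fin n) : MvPolynomial (Fin n) ℝ :=
  (-1) ^ (σ.filter (fun j => j < i)).card

/-- The exterior derivative `d`. -/
noncomputable def extD (n : ℕ) : PolyForm n →ₗ[ℝ] PolyForm n where
  toFun ω := fun σ => ∑ i ∈ σ, sgn σ i * pderiv i (ω (σ.erase i))
  map_add' ω η := by
    funext σ
    simp [Pi.add_apply, mul_add, Finset.sum_add_distrib]
  map_smul' c ω := by
    funext σ
    simp [Pi.smul_apply, Finset.smul_sum, mul_smul_comm]

/-- The Koszul operator `κ` (contraction with the position vector field). -/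
noncomputable def koszul (n : ℕ) : PolyForm n →ₗ[ℝ] PolyForm n where
  toFun ω := fun σ => ∑ i ∈ σᶜ, sgn σ i * X i * ω (insert i σ)
  map_add' ω η := by
    funext σ
    simp [Pi.add_apply, mul_add, Finset.sum_add_distrib]
  map_smul' c ω := by
    funext σ
    simp [Pi.smul_apply, Finset.smul_sum, mul_smul_comm]

/-- The space of (polynomial) differential `k`-forms: families supported on index sets of
cardinality `k`. -/
noncomputable def Lambda (n k : ℕ) : Submodule ℝ (PolyForm n) where
  carrier := {ω | ∀ σ, σ.card ≠ k → ω σ = 0}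
  zero_mem' := fun σ _ => rfl
  add_mem' := fun ha hb σ h => by simp only [Pi.add_apply, ha σ h, hb σ h, add_zero]
  smul_mem' := fun c ω h σ hσ => by simp only [Pi.smul_apply, h σ hσ, smul_zero]

/-- The form monomial `x^α dx_σ`. -/
noncomputable def formMonomial {n : ℕ} (α : Fin n →₀ ℕ) (σ : Finset (Fin n)) : PolyForm n :=
  fun τ => if τ = σ then monomial α 1 else 0

/-- The (total) degree `|α|` of a multi-index. -/
def mdeg {n : ℕ} (α : Fin n →₀ ℕ) : ℕ := α.sum fun _ m => m

/-- The linear degree of the form monomial `x^α dx_σ`: the number of `i ∉ σ` with `α i = 1`. -/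
def ldeg {n : ℕ} (α : Fin n →₀ ℕ) (σ : Finset (Fin n)) : ℕ :=
  ((σᶜ).filter fun i => α i = 1).card

/-- `H_rΛ^k(ℝ^n)`: `k`-forms with homogeneous degree-`r` polynomial coefficients. -/
noncomputable def Hspace (n r k : ℕ) : Submodule ℝ (PolyForm n) :=
  Submodule.span ℝ {ω | ∃ α σ, σ.card = k ∧ mdeg α = r ∧ ω = formMonomial α σ}

/-- `P_rΛ^k(ℝ^n)`: `k`-forms with polynomial coefficients of degree at most `r`. -/
noncomputable def Pspace (n r k : ℕ) : Submodule ℝ (PolyForm n) :=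
  Submodule.span ℝ {ω | ∃ α σ, σ.card = k ∧ mdeg α ≤ r ∧ ω = formMonomial α σ}

/-- `H_{r,l}Λ^k(ℝ^n)`: homogeneous degree-`r` `k`-forms of linear degree at least `l`. -/
noncomputable def Hl (n r l k : ℕ) : Submodule ℝ (PolyForm n) :=
  Submodule.span ℝ
    {ω | ∃ α σ, σ.card = k ∧ mdeg α = r ∧ l ≤ ldeg α σ ∧ ω = formMonomial α σ}

/-- `J_rΛ^k(ℝ^n) := Σ_{l ≥ 1} κ H_{r+l-1, l}Λ^{k+1}(ℝ^n)` (here `l` is reindexed as `l+1`). -/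
noncomputable def Jspace (n r k : ℕ) : Submodule ℝ (PolyForm n) :=
  ⨆ l : ℕ, Submodule.map (koszul n) (Hl n (r + l) (l + 1) (k + 1))

/-- The trimmed polynomial space `P_r^-Λ^k := P_{r-1}Λ^k ⊕ κ H_{r-1}Λ^{k+1}`. -/
noncomputable def PminusSpace (n r k : ℕ) : Submodule ℝ (PolyForm n) :=
  Pspace n (r - 1) k ⊔ Submodule.map (koszul n) (Hspace n (r - 1) (k + 1))

/-- The serendipity space `S_rΛ^k := P_rΛ^k + J_rΛ^k + d J_{r+1}Λ^{k-1}`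
(the last summand being absent for `k = 0`). -/
noncomputable def Sspace (n r k : ℕ) : Submodule ℝ (PolyForm n) :=
  Pspace n r k ⊔ Jspace n r k ⊔
    (if k = 0 then ⊥ else Submodule.map (extD n) (Jspace n (r + 1) (k - 1)))

/-- The trimmed serendipity space `S_r^-Λ^k := S_{r-1}Λ^k + κ S_{r-1}Λ^{k+1}`. -/
noncomputable def SminusSpace (n r k : ℕ) : Submodule ℝ (PolyForm n) :=
  Sspace n (r - 1) k ⊔ Submodule.map (koszul n) (Sspace n (r - 1) (k + 1))

/-!
On `k`-forms the homotopy formula reads `dκ + κd = E + k`, where `E = ∑ xᵢ ∂ᵢ` is the Euler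
operator acting coefficientwise. For `ω = κμ` with `dω = 0` both terms on the left vanish
(`κκ = 0`), so `(E + k) ω = 0`. On the coefficient of `x^α` the operator `E + k` is
multiplication by `|α| + k`, which is nonzero unless `α = 0`; and the coefficients of `κμ`,
being multiples of the `xᵢ`, have no constant term.
-/

open Finset

theorem Finset.sum_sum_erase_eq_zero_of_antisymm {ι M : Type*} [DecidableEq ι] [AddCommGroup M]
    {s : Finset ι} {f : ι → ι → M} (hf : ∀ i ∈ s, ∀ j ∈ s, i ≠ j → f j i = -f i j) :
    ∑ i ∈ s, ∑ j ∈ s.erase i, f i j = 0 := by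
  rw [← sum_finset_product' s.offDiag s (fun i => s.erase i) (by simp [and_comm, eq_comm])]
  refine sum_involution (fun p _ => p.swap) (fun p hp => ?_) (fun p hp _ => ?_)
    (fun p hp => mem_offDiag.mpr ?_) (fun _ _ => rfl)
  · obtain ⟨hi, hj, hij⟩ := mem_offDiag.mp hp
    rw [Prod.fst_swap, Prod.snd_swap, hf _ hi _ hj hij, add_neg_cancel]
  · obtain ⟨-, -, hij⟩ := mem_offDiag.mp hp
    exact fun h => hij (congrArg Prod.snd h)
  · obtain ⟨hi, hj, hij⟩ := mem_offDiag.mp hp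
    exact ⟨hj, hi, Ne.symm hij⟩

namespace MvPolynomial

variable {σ R : Type*} [CommSemiring R]

theorem coeff_X_mul_pderiv (α : σ →₀ ℕ) (i : σ) (p : MvPolynomial σ R) :
    coeff α (X i * pderiv i p) = α i • coeff α p := by
  classical
  induction p using MvPolynomial.induction_on' with
  | monomial m r =>
    rw [X_mul_pderiv_monomial, coeff_smul, coeff_monomial]
    split_ifs with h
    · rw [h]
    · rw [smul_zero, smul_zero]
  | add p q hp hq => rw [map_add, mul_add, coeff_add, coeff_add, hp, hq, smul_add]

theorem coeff_sum_X_mul_pderiv [Fintype σ] (α : σ →₀ ℕ) (p : MvPolynomial σ R) :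
    coeff α (∑ i, X i * pderiv i p) = α.degree • coeff α p := by
  simp only [coeff_sum, coeff_X_mul_pderiv, α.degree_eq_sum, sum_smul]

theorem eq_zero_of_sum_X_mul_pderiv_add_nsmul_eq_zero [Fintype σ] [IsAddTorsionFree R]
    {p : MvPolynomial σ R} {c : ℕ} (h : ∑ i, X i * pderiv i p + c • p = 0)
    (h0 : constantCoeff p = 0) : p = 0 := by
  ext α
  obtain rfl | hα := eq_or_ne α 0
  · exact h0
  have hcoeff : (α.degree + c) • coeff α p = 0 := by
    simpa only [coeff_add, coeff_sum_X_mul_pderiv, coeff_smul, add_smul, coeff_zero]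
      using congrArg (coeff α) h
  have hpos : α.degree + c ≠ 0 := by
    have := (Finsupp.degree_eq_zero_iff α).not.mpr hα
    omega
  rw [coeff_zero]
  exact (smul_eq_zero.mp hcoeff).resolve_left hpos

end MvPolynomial

namespace PolyForm

variable {n : ℕ}

theorem sgn_eq_C (σ : Finset (Fin n)) (i : Fin n) :
    sgn σ i = C ((-1 : ℝ) ^ #{j ∈ σ | j < i}) := by
  rw [sgn, map_pow, map_neg, map_one]

theorem sgn_mul_self (σ : Finset (Fin n)) (i : Fin n) : sgn σ i * sgn σ i = 1 := by
  rw [sgn, ← pow_add, ← two_mul, pow_mul, neg_one_sq, one_pow]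

theorem pderiv_sgn_mul (σ : Finset (Fin n)) (i j : Fin n) (p : MvPolynomial (Fin n) ℝ) :
    pderiv j (sgn σ i * p) = sgn σ i * pderiv j p := by
  rw [sgn_eq_C, pderiv_C_mul]

theorem sgn_insert {σ : Finset (Fin n)} {i : Fin n} (hi : i ∉ σ) (j : Fin n) :
    sgn (insert i σ) j = (if i < j then -1 else 1) * sgn σ j := by
  unfold sgn
  rw [filter_insert]
  split_ifs with h
  · rw [card_insert_of_notMem fun hmem => hi (mem_filter.mp hmem).1, pow_succ, mul_comm]
  · rw [one_mul]

theorem sgn_insert_self {σ : Finset (Fin n)} {i : Fin n} (hi : i ∉ σ) :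
    sgn (insert i σ) i = sgn σ i := by
  rw [sgn_insert hi, if_neg (lt_irrefl i), one_mul]

theorem sgn_erase_self (σ : Finset (Fin n)) (i : Fin n) : sgn (σ.erase i) i = sgn σ i := by
  rw [sgn, sgn, filter_erase,
    erase_eq_of_notMem (s := {j ∈ σ | j < i}) fun h => lt_irrefl i (mem_filter.mp h).2]

theorem sgn_erase {σ : Finset (Fin n)} {i : Fin n} (hi : i ∈ σ) (j : Fin n) :
    sgn (σ.erase i) j = (if i < j then -1 else 1) * sgn σ j := by
  have h := sgn_insert (notMem_erase i σ) j
  rw [insert_erase hi] at h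
  rw [h, ← mul_assoc]
  split_ifs <;> ring

theorem sgn_mul_sgn_insert_antisymm {τ : Finset (Fin n)} {i j : Fin n} (hi : i ∉ τ)
    (hj : j ∉ τ) (hij : i ≠ j) :
    sgn τ i * sgn (insert i τ) j = -(sgn τ j * sgn (insert j τ) i) := by
  rw [sgn_insert hi j, sgn_insert hj i]
  rcases lt_or_gt_of_ne hij with h | h
  · rw [if_pos h, if_neg (not_lt.mpr h.le)]; ring
  · rw [if_neg (not_lt.mpr h.le), if_pos h]; ring

theorem sgn_mul_sgn_erase_antisymm {σ : Finset (Fin n)} {i j : Fin n} (hi : i ∈ σ) (hj : j ∉ σ) :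
    sgn σ i * sgn (σ.erase i) j = -(sgn σ j * sgn (insert j σ) i) := by
  have hij : i ≠ j := fun h => hj (h ▸ hi)
  rw [sgn_erase hi j, sgn_insert hj i]
  rcases lt_or_gt_of_ne hij with h | h
  · rw [if_pos h, if_neg (not_lt.mpr h.le)]; ring
  · rw [if_neg (not_lt.mpr h.le), if_pos h]; ring

theorem koszul_apply (ω : PolyForm n) (σ : Finset (Fin n)) :
    koszul n ω σ = ∑ i ∈ σᶜ, sgn σ i * X i * ω (insert i σ) := rfl

theorem extD_apply (ω : PolyForm n) (σ : Finset (Fin n)) :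
    extD n ω σ = ∑ i ∈ σ, sgn σ i * pderiv i (ω (σ.erase i)) := rfl

theorem koszul_koszul (ω : PolyForm n) : koszul n (koszul n ω) = 0 := by
  funext σ
  simp only [koszul_apply, compl_insert, mul_sum]
  refine sum_sum_erase_eq_zero_of_antisymm fun i hi j hj hij => ?_
  rw [insert_comm i j σ]
  linear_combination (X i * X j * ω (insert j (insert i σ))) *
    sgn_mul_sgn_insert_antisymm (mem_compl.mp hi) (mem_compl.mp hj) hij

theorem constantCoeff_koszul (ω : PolyForm n) (σ : Finset (Fin n)) :
    constantCoeff (koszul n ω σ) = 0 := by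
  simp only [koszul_apply, map_sum, map_mul, constantCoeff_X, mul_zero, zero_mul, sum_const_zero]

theorem sgn_mul_pderiv_koszul_erase (ω : PolyForm n) {σ : Finset (Fin n)} {i : Fin n}
    (hi : i ∈ σ) :
    sgn σ i * pderiv i (koszul n ω (σ.erase i)) = ω σ + X i * pderiv i (ω σ) +
      ∑ j ∈ σᶜ, sgn σ i * sgn (σ.erase i) j * (X j * pderiv i (ω (insert j (σ.erase i)))) := by
  have hself : pderiv i (sgn σ i * X i * ω σ) = sgn σ i * (ω σ + X i * pderiv i (ω σ)) := by
    rw [mul_assoc, pderiv_sgn_mul, pderiv_mul, pderiv_X_self, one_mul]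
  have hother : ∀ j ∈ σᶜ, pderiv i (sgn (σ.erase i) j * X j * ω (insert j (σ.erase i))) =
      sgn (σ.erase i) j * (X j * pderiv i (ω (insert j (σ.erase i)))) := by
    intro j hj
    have hji : j ≠ i := fun h => mem_compl.mp hj (h ▸ hi)
    rw [mul_assoc, pderiv_sgn_mul, pderiv_mul, pderiv_X_of_ne hji, zero_mul, zero_add]
  rw [koszul_apply, compl_erase, sum_insert (by simp [hi]), sgn_erase_self, insert_erase hi,
    map_add, map_sum, hself, sum_congr rfl hother, mul_add, ← mul_assoc, sgn_mul_self, one_mul,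
    mul_sum]
  simp only [mul_assoc]

theorem sgn_mul_X_mul_extD_insert (ω : PolyForm n) {σ : Finset (Fin n)} {j : Fin n}
    (hj : j ∉ σ) :
    sgn σ j * X j * extD n ω (insert j σ) = X j * pderiv j (ω σ) -
      ∑ i ∈ σ, sgn σ i * sgn (σ.erase i) j * (X j * pderiv i (ω (insert j (σ.erase i)))) := by
  have herase : ∀ i ∈ σ, (insert j σ).erase i = insert j (σ.erase i) := fun i hi =>
    erase_insert_of_ne fun h => hj (h ▸ hi)
  rw [extD_apply, sum_insert hj, sgn_insert_self hj, erase_insert hj, mul_add, mul_sum,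
    sum_congr rfl fun i hi => by rw [herase i hi], sub_eq_add_neg, ← sum_neg_distrib]
  congr 1
  · linear_combination (X j * pderiv j (ω σ)) * sgn_mul_self σ j
  · refine sum_congr rfl fun i hi => ?_
    linear_combination (X j * pderiv i (ω (insert j (σ.erase i)))) *
      sgn_mul_sgn_erase_antisymm hi hj

theorem extD_koszul_add_koszul_extD_apply (ω : PolyForm n) (σ : Finset (Fin n)) :
    extD n (koszul n ω) σ + koszul n (extD n ω) σ =
      ∑ i, X i * pderiv i (ω σ) + #σ • ω σ := by
  rw [extD_apply, koszul_apply, sum_congr rfl fun i hi => sgn_mul_pderiv_koszul_erase ω hi,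
    sum_congr rfl fun j hj => sgn_mul_X_mul_extD_insert ω (mem_compl.mp hj),
    sum_add_distrib, sum_add_distrib, sum_sub_distrib, sum_comm (s := σ) (t := σᶜ), sum_const,
    ← sum_add_sum_compl σ fun i => X i * pderiv i (ω σ)]
  abel

end PolyForm

theorem extD_injective_on_koszul_image_general (n : ℕ) (μ : PolyForm n)
    (h : extD n (koszul n μ) = 0) :
    koszul n μ = 0 := by
  funext σ
  refine MvPolynomial.eq_zero_of_sum_X_mul_pderiv_add_nsmul_eq_zero (c := #σ) ?_
    (PolyForm.constantCoeff_koszul μ σ)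
  rw [← PolyForm.extD_koszul_add_koszul_extD_apply, h, PolyForm.koszul_koszul]
  simp only [map_zero, Pi.zero_apply, add_zero]

/-- `d` is injective on the image of `κ`: if `μ` is a polynomial
`(k+1)`-form and `d(κμ) = 0`, then `κμ = 0`. -/
theorem extD_injective_on_koszul_image (n k : ℕ) (μ : PolyForm n) (hμ : μ ∈ Lambda n (k + 1))
    (h : extD n (koszul n μ) = 0) :
    koszul n μ = 0 :=
  extD_injective_on_koszul_image_general n μ h
end

section
/- (Exactness of the Koszul complex of polynomial forms) The sequence 0 → P_rΛ^n(ℝ^n) →κ P_{r+1}Λ^{n−1}(ℝ^n) →κ ⋯ →κ P_{r+n}Λ^0(ℝ^n) → ℝ → 0 is exact, where the maps are the Koszul operator κ and the last map is evaluation at the origin; equivalently, for 0 < k < n, a polynomial k-form ω with κω = 0 satisfies ω = κη for some polynomial (k+1)-form η. -/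
open MvPolynomial

/-!
On `k`-forms whose coefficients are homogeneous of degree `r`, the homotopy formula
`κd + dκ = (r + k) • id` holds by Euler's identity. Since `κ` raises degrees by exactly one, each
homogeneous component `ω_r` of a `κ`-closed form is again `κ`-closed, so
`ω_r = κ ((r + k)⁻¹ • dω_r)`, and `r + k ≠ 0` because `k > 0`.
-/

namespace MvPolynomial

variable {σ R : Type*} [CommSemiring R]

theorem homogeneousComponent_mul_of_isHomogeneous {φ : MvPolynomial σ R} {m : ℕ}
    (hφ : φ.IsHomogeneous m) (r : ℕ) (ψ : MvPolynomial σ R) :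
    homogeneousComponent (m + r) (φ * ψ) = φ * homogeneousComponent r ψ := by
  induction ψ using MvPolynomial.induction_on' with
  | monomial d c =>
    have hd : (monomial d c).IsHomogeneous d.degree := isHomogeneous_monomial c rfl
    rw [homogeneousComponent_of_mem (hφ.mul hd), homogeneousComponent_of_mem hd]
    by_cases hr : r = d.degree
    · simp [hr]
    · rw [if_neg (by omega), if_neg hr, mul_zero]
  | add ψ₁ ψ₂ h₁ h₂ => rw [mul_add, map_add, map_add, h₁, h₂, mul_add]

end MvPolynomial

open Finset MvPolynomial

variable {n : ℕ}

theorem koszul_apply (ω : PolyForm n) (σ : Finset (Fin n)) :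
    koszul n ω σ = ∑ i ∈ σᶜ, sgn σ i * X i * ω (insert i σ) := rfl

theorem extD_apply (ω : PolyForm n) (σ : Finset (Fin n)) :
    extD n ω σ = ∑ i ∈ σ, sgn σ i * pderiv i (ω (σ.erase i)) := rfl

theorem sgn_mul_self (σ : Finset (Fin n)) (i : Fin n) : sgn σ i * sgn σ i = 1 := by
  simp [sgn, ← pow_add, ← two_mul, pow_mul]

theorem sgn_eq_C (σ : Finset (Fin n)) (i : Fin n) :
    sgn σ i = C ((-1 : ℝ) ^ (σ.filter (fun j => j < i)).card) := by
  simp [sgn]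

theorem pderiv_sgn_mul (σ : Finset (Fin n)) (j i : Fin n) (p : MvPolynomial (Fin n) ℝ) :
    pderiv i (sgn σ j * p) = sgn σ j * pderiv i p := by
  rw [sgn_eq_C, pderiv_C_mul]

theorem sgn_insert_self (σ : Finset (Fin n)) (i : Fin n) : sgn (insert i σ) i = sgn σ i := by
  rw [sgn, sgn, filter_insert, if_neg (lt_irrefl i)]

theorem sgn_erase_self (σ : Finset (Fin n)) (i : Fin n) : sgn (σ.erase i) i = sgn σ i := by
  rw [sgn, sgn, filter_erase, erase_eq_of_notMem (by simp)]

theorem sgn_insert_of_notMem {σ : Finset (Fin n)} {i j : Fin n} (hi : i ∉ σ) :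
    sgn (insert i σ) j = (if i < j then -1 else 1) * sgn σ j := by
  unfold sgn
  rw [filter_insert]
  by_cases h : i < j
  · rw [if_pos h, if_pos h, card_insert_of_notMem (fun hmem => hi (mem_of_mem_filter i hmem)),
      pow_succ]
    ring
  · rw [if_neg h, if_neg h, one_mul]

theorem sgn_erase_of_mem {σ : Finset (Fin n)} {i j : Fin n} (hj : j ∈ σ) :
    sgn (σ.erase j) i = (if j < i then -1 else 1) * sgn σ i := by
  conv_rhs => rw [← insert_erase hj]
  rw [sgn_insert_of_notMem (notMem_erase j σ)]
  split_ifs <;> ring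

/-- Moving `dx_i` in and `dx_j` out of `dx_σ` in the two possible orders gives opposite signs. -/
theorem sgn_mul_sgn_insert_add_sgn_mul_sgn_erase {σ : Finset (Fin n)} {i j : Fin n}
    (hi : i ∉ σ) (hj : j ∈ σ) :
    sgn σ i * sgn (insert i σ) j + sgn σ j * sgn (σ.erase j) i = 0 := by
  have hij : i ≠ j := fun h => hi (h ▸ hj)
  rw [sgn_insert_of_notMem hi, sgn_erase_of_mem hj]
  rcases hij.lt_or_gt with h | h
  · rw [if_pos h, if_neg (asymm h)]; ring
  · rw [if_neg (asymm h), if_pos h]; ring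

theorem koszul_extD_apply (ω : PolyForm n) (σ : Finset (Fin n)) :
    koszul n (extD n ω) σ
      = ∑ i ∈ σᶜ, X i * pderiv i (ω σ)
        + ∑ i ∈ σᶜ, ∑ j ∈ σ, (sgn σ i * sgn (insert i σ) j)
            * (X i * pderiv j (ω (insert i (σ.erase j)))) := by
  rw [koszul_apply, ← sum_add_distrib]
  refine sum_congr rfl fun i hi => ?_
  rw [mem_compl] at hi
  rw [extD_apply, sum_insert hi, erase_insert hi, sgn_insert_self, mul_add, mul_sum]
  congr 1
  · calc sgn σ i * X i * (sgn σ i * pderiv i (ω σ))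
        = (sgn σ i * sgn σ i) * (X i * pderiv i (ω σ)) := by ring
      _ = X i * pderiv i (ω σ) := by rw [sgn_mul_self, one_mul]
  · refine sum_congr rfl fun j hj => ?_
    rw [erase_insert_of_ne (ne_of_mem_of_not_mem hj hi).symm]
    ring

theorem sgn_mul_pderiv_koszul_erase (ω : PolyForm n) {σ : Finset (Fin n)} {i : Fin n}
    (hi : i ∈ σ) :
    sgn σ i * pderiv i (koszul n ω (σ.erase i))
      = X i * pderiv i (ω σ) + ω σ
        + ∑ j ∈ σᶜ, (sgn σ i * sgn (σ.erase i) j)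
            * (X j * pderiv i (ω (insert j (σ.erase i)))) := by
  rw [koszul_apply, compl_erase, sum_insert (by simp [hi]), sgn_erase_self, insert_erase hi,
    map_add, map_sum, mul_add, mul_sum]
  congr 1
  · rw [mul_assoc (sgn σ i) (X i) (ω σ), pderiv_sgn_mul, pderiv_mul, pderiv_X_self]
    calc sgn σ i * (sgn σ i * (1 * ω σ + X i * pderiv i (ω σ)))
        = (sgn σ i * sgn σ i) * (X i * pderiv i (ω σ) + ω σ) := by ring
      _ = X i * pderiv i (ω σ) + ω σ := by rw [sgn_mul_self, one_mul]
  · refine sum_congr rfl fun j hj => ?_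
    rw [mem_compl] at hj
    rw [mul_assoc (sgn (σ.erase i) j) (X j) _, pderiv_sgn_mul, pderiv_mul,
      pderiv_X_of_ne (ne_of_mem_of_not_mem hi hj).symm]
    ring

theorem extD_koszul_apply (ω : PolyForm n) (σ : Finset (Fin n)) :
    extD n (koszul n ω) σ
      = ∑ i ∈ σ, X i * pderiv i (ω σ) + σ.card • ω σ
        + ∑ i ∈ σ, ∑ j ∈ σᶜ, (sgn σ i * sgn (σ.erase i) j)
            * (X j * pderiv i (ω (insert j (σ.erase i)))) := by
  rw [extD_apply, sum_congr rfl fun i => sgn_mul_pderiv_koszul_erase ω, sum_add_distrib,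
    sum_add_distrib, sum_const]

theorem koszul_extD_add_extD_koszul_apply (ω : PolyForm n) (σ : Finset (Fin n)) :
    koszul n (extD n ω) σ + extD n (koszul n ω) σ
      = ∑ i, X i * pderiv i (ω σ) + σ.card • ω σ := by
  have h_euler : ∑ i ∈ σ, X i * pderiv i (ω σ) + ∑ i ∈ σᶜ, X i * pderiv i (ω σ)
      = ∑ i, X i * pderiv i (ω σ) := sum_add_sum_compl σ _
  have h_cross : ∑ i ∈ σᶜ, ∑ j ∈ σ, (sgn σ i * sgn (insert i σ) j)
          * (X i * pderiv j (ω (insert i (σ.erase j))))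
      + ∑ i ∈ σ, ∑ j ∈ σᶜ, (sgn σ i * sgn (σ.erase i) j)
          * (X j * pderiv i (ω (insert j (σ.erase i)))) = 0 := by
    rw [sum_comm (s := σ) (t := σᶜ), ← sum_add_distrib]
    refine sum_eq_zero fun i hi => ?_
    rw [← sum_add_distrib]
    refine sum_eq_zero fun j hj => ?_
    rw [← add_mul, sgn_mul_sgn_insert_add_sgn_mul_sgn_erase (mem_compl.mp hi) hj, zero_mul]
  rw [koszul_extD_apply, extD_koszul_apply]
  linear_combination h_euler + h_cross

theorem koszul_extD_add_extD_koszul_of_isHomogeneous {k r : ℕ} {ω : PolyForm n}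
    (hω : ω ∈ Lambda n k) (hr : ∀ σ, (ω σ).IsHomogeneous r) :
    koszul n (extD n ω) + extD n (koszul n ω) = (r + k) • ω := by
  funext σ
  rw [Pi.add_apply, koszul_extD_add_extD_koszul_apply, (hr σ).sum_X_mul_pderiv, Pi.smul_apply,
    add_smul]
  by_cases hσ : σ.card = k
  · rw [hσ]
  · simp [hω σ hσ]

theorem extD_mem_Lambda_succ {k : ℕ} {ω : PolyForm n} (hω : ω ∈ Lambda n k) :
    extD n ω ∈ Lambda n (k + 1) := by
  intro σ hσ
  refine sum_eq_zero fun i hi => ?_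
  have := card_pos.mpr ⟨i, hi⟩
  rw [hω _ (by rw [card_erase_of_mem hi]; omega), map_zero, mul_zero]

noncomputable def PolyForm.homogeneousComponent (r : ℕ) (ω : PolyForm n) : PolyForm n :=
  fun σ => MvPolynomial.homogeneousComponent r (ω σ)

theorem PolyForm.homogeneousComponent_mem_Lambda {k : ℕ} (r : ℕ) {ω : PolyForm n}
    (hω : ω ∈ Lambda n k) : PolyForm.homogeneousComponent r ω ∈ Lambda n k := by
  intro σ hσ
  simp [PolyForm.homogeneousComponent, hω σ hσ]

theorem PolyForm.exists_sum_homogeneousComponent (ω : PolyForm n) :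
    ∃ N, ∑ r ∈ range N, PolyForm.homogeneousComponent r ω = ω := by
  refine ⟨univ.sup (fun σ => (ω σ).totalDegree) + 1, funext fun σ => ?_⟩
  have hle : (ω σ).totalDegree ≤ univ.sup (fun σ => (ω σ).totalDegree) :=
    le_sup (f := fun σ => (ω σ).totalDegree) (mem_univ σ)
  simp only [Finset.sum_apply, PolyForm.homogeneousComponent]
  rw [← sum_subset (range_subset_range.mpr (Nat.succ_le_succ hle)) fun r _ hr =>
      homogeneousComponent_eq_zero r _ (by simp at hr; omega)]
  exact sum_homogeneousComponent (ω σ)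

theorem koszul_homogeneousComponent (r : ℕ) (ω : PolyForm n) :
    koszul n (PolyForm.homogeneousComponent r ω)
      = PolyForm.homogeneousComponent (r + 1) (koszul n ω) := by
  funext σ
  simp only [PolyForm.homogeneousComponent, koszul_apply, map_sum]
  refine sum_congr rfl fun i _ => ?_
  rw [add_comm, sgn_eq_C, homogeneousComponent_mul_of_isHomogeneous (isHomogeneous_C_mul_X _ i)]

theorem koszul_smul_extD_of_isHomogeneous {k r : ℕ} {ω : PolyForm n} (hω : ω ∈ Lambda n k)
    (hr : ∀ σ, (ω σ).IsHomogeneous r) (hκ : koszul n ω = 0) (hrk : r + k ≠ 0) :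
    koszul n (((r + k : ℕ) : ℝ)⁻¹ • extD n ω) = ω := by
  have h := koszul_extD_add_extD_koszul_of_isHomogeneous hω hr
  rw [hκ, map_zero, add_zero, ← Nat.cast_smul_eq_nsmul ℝ] at h
  rw [map_smul, h, smul_smul, inv_mul_cancel₀ (by exact_mod_cast hrk), one_smul]

theorem koszul_complex_exact_general (n k : ℕ) (hk : 0 < k) (ω : PolyForm n)
    (hω : ω ∈ Lambda n k) (h : koszul n ω = 0) :
    ∃ η ∈ Lambda n (k + 1), koszul n η = ω := by
  obtain ⟨N, hN⟩ := ω.exists_sum_homogeneousComponent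
  have hcomp : ∀ r, PolyForm.homogeneousComponent r ω ∈ Lambda n k := fun r =>
    PolyForm.homogeneousComponent_mem_Lambda r hω
  refine ⟨∑ r ∈ range N,
    ((r + k : ℕ) : ℝ)⁻¹ • extD n (PolyForm.homogeneousComponent r ω), ?_, ?_⟩
  · exact Submodule.sum_mem _ fun r _ => Submodule.smul_mem _ _ (extD_mem_Lambda_succ (hcomp r))
  · conv_rhs => rw [← hN]
    rw [map_sum]
    refine sum_congr rfl fun r _ => koszul_smul_extD_of_isHomogeneous (hcomp r)
      (fun σ => homogeneousComponent_isHomogeneous r (ω σ)) ?_ (by omega)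
    rw [koszul_homogeneousComponent, h]
    exact funext fun σ => map_zero _

/-- exactness of the Koszul complex of polynomial forms: for `0 < k < n`,
a polynomial `k`-form `ω` with `κω = 0` satisfies `ω = κη` for some polynomial
`(k+1)`-form `η`. -/
theorem koszul_complex_exact (n k : ℕ) (hk : 0 < k) (hkn : k < n) (ω : PolyForm n)
    (hω : ω ∈ Lambda n k) (h : koszul n ω = 0) :
    ∃ η ∈ Lambda n (k + 1), koszul n η = ω :=
  koszul_complex_exact_general n k hk ω hω h
end
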